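/- arXiv:1410.1553 — 5 statements merged into one kernel-verified Lean document; each statement's English description precedes it below -/
import Mathlib

section
/- Let A₁,…,A_m be symmetric n×n real matrices. Then max over unit vectors x₁, x₂ ∈ ℝⁿ of the Euclidean norm of the vector (x₁ᵀA₁x₂, …, x₁ᵀA_mx₂) equals max over unit vectors x ∈ ℝⁿ of the Euclidean norm of (xᵀA₁x, …, xᵀA_mx). -/
/-!
Fix unit vectors `x, y` and put `b = (xᵀAᵢy)ᵢ`, and let `M` be the quadratic supremum, so that
`‖(wᵀAᵢw)ᵢ‖ ≤ M‖w‖²` for every `w` by homogeneity. By polarization,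
`4‖b‖² = ⟪b, ((x+y)ᵀAᵢ(x+y))ᵢ⟫ - ⟪b, ((x-y)ᵀAᵢ(x-y))ᵢ⟫`, and Cauchy–Schwarz with the
parallelogram law bounds this by `‖b‖ M (‖x+y‖² + ‖x-y‖²) = 4‖b‖M`; hence `‖b‖ ≤ M`.
This works for any symmetric bilinear map between real inner product spaces.
-/

open Matrix BigOperators RealInnerProductSpace

theorem LinearMap.apply_add_add_sub_apply_sub_sub {R M N : Type*} [CommRing R] [AddCommGroup M]
    [Module R M] [AddCommGroup N] [Module R N] (B : M →ₗ[R] M →ₗ[R] N)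
    (hB : ∀ x y, B x y = B y x) (x y : M) :
    B (x + y) (x + y) - B (x - y) (x - y) = (4 : R) • B x y := by
  simp only [map_add, map_sub, LinearMap.add_apply, LinearMap.sub_apply, hB y x]
  module

theorem LinearMap.norm_apply_self_le_of_forall_norm_eq_one {E F : Type*} [NormedAddCommGroup E]
    [NormedSpace ℝ E] [NormedAddCommGroup F] [NormedSpace ℝ F] (B : E →ₗ[ℝ] E →ₗ[ℝ] F) {M : ℝ}
    (hM : ∀ x, ‖x‖ = 1 → ‖B x x‖ ≤ M) (w : E) : ‖B w w‖ ≤ M * ‖w‖ ^ 2 := by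
  rcases eq_or_ne w 0 with rfl | hw
  · simp
  have h := hM (‖w‖⁻¹ • w) (norm_smul_inv_norm hw)
  rwa [LinearMap.map_smul₂, map_smul, smul_smul, norm_smul, norm_mul, norm_inv, norm_norm,
    ← le_div_iff₀' (by positivity [norm_pos_iff.mpr hw]), ← mul_inv, div_inv_eq_mul, ← sq] at h

section InnerProductSpace

variable {E F : Type*} [NormedAddCommGroup E] [InnerProductSpace ℝ E]
  [NormedAddCommGroup F] [InnerProductSpace ℝ F]

theorem LinearMap.norm_apply_le_of_forall_norm_apply_self_le (B : E →ₗ[ℝ] E →ₗ[ℝ] F)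
    (hB : ∀ x y, B x y = B y x) {M : ℝ} (hM : ∀ x, ‖x‖ = 1 → ‖B x x‖ ≤ M) {x y : E}
    (hx : ‖x‖ = 1) (hy : ‖y‖ = 1) : ‖B x y‖ ≤ M := by
  have hM0 : 0 ≤ M := (norm_nonneg _).trans (hM x hx)
  set b := B x y
  have hpair : ∀ w, |⟪b, B w w⟫| ≤ ‖b‖ * (M * ‖w‖ ^ 2) := fun w =>
    (abs_real_inner_le_norm _ _).trans
      (mul_le_mul_of_nonneg_left (B.norm_apply_self_le_of_forall_norm_eq_one hM w) (norm_nonneg _))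
  have : 4 * ‖b‖ ^ 2 ≤ 4 * (‖b‖ * M) :=
    calc 4 * ‖b‖ ^ 2 = ⟪b, B (x + y) (x + y)⟫ - ⟪b, B (x - y) (x - y)⟫ := by
          rw [← inner_sub_right, B.apply_add_add_sub_apply_sub_sub hB, real_inner_smul_right,
            real_inner_self_eq_norm_sq]
      _ ≤ ‖b‖ * (M * ‖x + y‖ ^ 2) + ‖b‖ * (M * ‖x - y‖ ^ 2) := by
          linarith [(le_abs_self _).trans (hpair (x + y)), (neg_le_abs _).trans (hpair (x - y))]
      _ = 4 * (‖b‖ * M) := by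
          rw [← mul_add, ← mul_add, parallelogram_law_with_norm ℝ, hx, hy]
          ring
  nlinarith [norm_nonneg b]

/-- Also true in the degenerate cases: both sets are empty when `E` is trivial, and both
suprema are the junk value `0` when the quadratic one is unbounded. -/
theorem LinearMap.sSup_norm_apply_eq_sSup_norm_apply_self (B : E →ₗ[ℝ] E →ₗ[ℝ] F)
    (hB : ∀ x y, B x y = B y x) :
    sSup {r : ℝ | ∃ x y : E, ‖x‖ = 1 ∧ ‖y‖ = 1 ∧ r = ‖B x y‖} =
      sSup {r : ℝ | ∃ x : E, ‖x‖ = 1 ∧ r = ‖B x x‖} := by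
  set bilin := {r : ℝ | ∃ x y : E, ‖x‖ = 1 ∧ ‖y‖ = 1 ∧ r = ‖B x y‖}
  set quad := {r : ℝ | ∃ x : E, ‖x‖ = 1 ∧ r = ‖B x x‖}
  have hsub : quad ⊆ bilin := by
    rintro _ ⟨x, hx, rfl⟩
    exact ⟨x, x, hx, hx, rfl⟩
  rcases quad.eq_empty_or_nonempty with hempty | hne
  · have : bilin = ∅ := by
      refine Set.eq_empty_of_forall_notMem ?_
      rintro _ ⟨x, -, hx, -, -, rfl⟩
      exact hempty.subset ⟨x, hx, rfl⟩
    rw [this, hempty]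
  by_cases hbdd : BddAbove quad
  · have hle : ∀ r ∈ bilin, r ≤ sSup quad := by
      rintro _ ⟨x, y, hx, hy, rfl⟩
      exact B.norm_apply_le_of_forall_norm_apply_self_le hB
        (fun z hz => le_csSup hbdd ⟨z, hz, rfl⟩) hx hy
    exact le_antisymm (csSup_le (hne.mono hsub) hle) (csSup_le_csSup ⟨_, hle⟩ hne hsub)
  · rw [Real.sSup_of_not_bddAbove hbdd, Real.sSup_of_not_bddAbove (mt (BddAbove.mono hsub) hbdd)]

end InnerProductSpace

theorem Matrix.IsSymm.dotProduct_mulVec_comm {ι R : Type*} [Fintype ι] [CommSemiring R]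
    {A : Matrix ι ι R} (hA : A.IsSymm) (x y : ι → R) : x ⬝ᵥ A *ᵥ y = y ⬝ᵥ A *ᵥ x := by
  rw [dotProduct_mulVec, ← mulVec_transpose, hA.eq, dotProduct_comm]

def Matrix.familyToLinearMap₂ {ι κ : Type*} [Fintype ι] (A : κ → Matrix ι ι ℝ) :
    EuclideanSpace ℝ ι →ₗ[ℝ] EuclideanSpace ℝ ι →ₗ[ℝ] EuclideanSpace ℝ κ :=
  LinearMap.mk₂ ℝ (fun x y => WithLp.toLp 2 fun k => x.ofLp ⬝ᵥ A k *ᵥ y.ofLp)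
    (by intros; ext; simp [add_dotProduct])
    (by intros; ext; simp)
    (by intros; ext; simp [mulVec_add])
    (by intros; ext; simp [mulVec_smul])

theorem Matrix.familyToLinearMap₂_apply {ι κ : Type*} [Fintype ι] (A : κ → Matrix ι ι ℝ)
    (x y : EuclideanSpace ℝ ι) :
    familyToLinearMap₂ A x y = WithLp.toLp 2 fun k => x.ofLp ⬝ᵥ A k *ᵥ y.ofLp :=
  rfl

theorem Matrix.familyToLinearMap₂_comm {ι κ : Type*} [Fintype ι] {A : κ → Matrix ι ι ℝ}
    (hA : ∀ k, (A k).IsHermitian) (x y : EuclideanSpace ℝ ι) :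
    familyToLinearMap₂ A x y = familyToLinearMap₂ A y x := by
  ext k
  have hk : (A k).IsSymm := (conjTranspose_eq_transpose_of_trivial (A k)).symm.trans (hA k)
  exact hk.dotProduct_mulVec_comm _ _

theorem sup_bilinear_eq_sup_quadratic_general {m n : ℕ}
    (A : Fin m → Matrix (Fin n) (Fin n) ℝ) (hA : ∀ i, (A i).IsHermitian) :
    sSup {r : ℝ | ∃ x₁ x₂ : Fin n → ℝ, (∑ i, x₁ i ^ 2) = 1 ∧ (∑ i, x₂ i ^ 2) = 1 ∧
        r = Real.sqrt (∑ i, (x₁ ⬝ᵥ (A i).mulVec x₂) ^ 2)} =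
    sSup {r : ℝ | ∃ x : Fin n → ℝ, (∑ i, x i ^ 2) = 1 ∧
        r = Real.sqrt (∑ i, (x ⬝ᵥ (A i).mulVec x) ^ 2)} := by
  have h := (familyToLinearMap₂ A).sSup_norm_apply_eq_sSup_norm_apply_self
    (familyToLinearMap₂_comm hA)
  simpa only [(WithLp.toLp_surjective 2).exists, familyToLinearMap₂_apply,
    EuclideanSpace.norm_eq, Real.norm_eq_abs, sq_abs, Real.sqrt_eq_one] using h

/-- `max_{|x₁|=|x₂|=1} ‖(x₁ᵀA₁x₂,…,x₁ᵀA_mx₂)‖ = max_{|x|=1} ‖(xᵀA₁x,…,xᵀA_mx)‖`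
for symmetric matrices `Aᵢ`. -/
theorem sup_bilinear_eq_sup_quadratic {m n : ℕ} (hm : 0 < m) (hn : 0 < n)
    (A : Fin m → Matrix (Fin n) (Fin n) ℝ) (hA : ∀ i, (A i).IsHermitian) :
    sSup {r : ℝ | ∃ x₁ x₂ : Fin n → ℝ, (∑ i, x₁ i ^ 2) = 1 ∧ (∑ i, x₂ i ^ 2) = 1 ∧
        r = Real.sqrt (∑ i, (x₁ ⬝ᵥ (A i).mulVec x₂) ^ 2)} =
    sSup {r : ℝ | ∃ x : Fin n → ℝ, (∑ i, x i ^ 2) = 1 ∧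
        r = Real.sqrt (∑ i, (x ⬝ᵥ (A i).mulVec x) ^ 2)} :=
  sup_bilinear_eq_sup_quadratic_general A hA
end

section
/- Let λ₁,…,λ_n be real numbers, α₁,…,α_n nonzero reals, and define F(λ) = λ − Σ_k αₖ²/(λₖ − λ) for λ not equal to any λₖ. If λ̃₁ > λ̃₂ are two critical points of F (i.e. F′(λ̃₁) = F′(λ̃₂) = 0, with F′(λ) = 1 − Σ_k αₖ²/(λₖ − λ)²), then F(λ̃₁) > F(λ̃₂). -/
/-! With `uₖ = (λₖ − λ̃₁)⁻¹` and `vₖ = (λₖ − λ̃₂)⁻¹` one has `uₖ − vₖ = (λ̃₁ − λ̃₂) uₖ vₖ`, so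
`F(λ̃₁) − F(λ̃₂) = (λ̃₁ − λ̃₂)(1 − ∑ αₖ² uₖ vₖ)`. At critical points `∑ αₖ² uₖ² = ∑ αₖ² vₖ² = 1`,
hence `2 (1 − ∑ αₖ² uₖ vₖ) = ∑ αₖ² (uₖ − vₖ)²`, which is positive because some `αₖ uₖ` is nonzero. -/

open Finset

theorem Finset.sum_mul_mul_lt_one_of_sum_mul_sq_eq_one {ι : Type*} {s : Finset ι}
    {w u v : ι → ℝ} (hw : ∀ i ∈ s, 0 ≤ w i)
    (hu : ∑ i ∈ s, w i * u i ^ 2 = 1) (hv : ∑ i ∈ s, w i * v i ^ 2 = 1)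
    {k : ι} (hks : k ∈ s) (hwk : w k ≠ 0) (huv : u k ≠ v k) :
    ∑ i ∈ s, w i * (u i * v i) < 1 := by
  have hexpand : ∑ i ∈ s, w i * (u i - v i) ^ 2
      = ∑ i ∈ s, w i * u i ^ 2 + ∑ i ∈ s, w i * v i ^ 2 - 2 * ∑ i ∈ s, w i * (u i * v i) := by
    rw [mul_sum, ← sum_add_distrib, ← sum_sub_distrib]
    exact sum_congr rfl fun i _ => by ring
  have hpos : 0 < ∑ i ∈ s, w i * (u i - v i) ^ 2 :=
    sum_pos' (fun i hi => mul_nonneg (hw i hi) (sq_nonneg _))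
      ⟨k, hks, mul_pos ((hw k hks).lt_of_ne' hwk) (pow_two_pos_of_ne_zero (sub_ne_zero.2 huv))⟩
  linarith

theorem Finset.sum_div_sub_sub_sum_div_sub {ι : Type*} (s : Finset ι) (a x : ι → ℝ) {y z : ℝ}
    (hy : ∀ i ∈ s, y ≠ x i) (hz : ∀ i ∈ s, z ≠ x i) :
    ∑ i ∈ s, a i / (x i - y) - ∑ i ∈ s, a i / (x i - z)
      = (y - z) * ∑ i ∈ s, a i * ((x i - y)⁻¹ * (x i - z)⁻¹) := by
  rw [mul_sum, ← sum_sub_distrib]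
  refine sum_congr rfl fun i hi => ?_
  have := sub_ne_zero.2 (hy i hi).symm
  have := sub_ne_zero.2 (hz i hi).symm
  field_simp
  ring

theorem F_strict_mono_at_critical_points_general {n : ℕ}
    (lam : Fin n → ℝ) (alpha : Fin n → ℝ)
    (l1 l2 : ℝ) (hlt : l2 < l1)
    (h1 : ∀ k, l1 ≠ lam k) (h2 : ∀ k, l2 ≠ lam k)
    (hc1 : 1 - ∑ k, alpha k ^ 2 / (lam k - l1) ^ 2 = 0)
    (hc2 : 1 - ∑ k, alpha k ^ 2 / (lam k - l2) ^ 2 = 0) :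
    (l2 - ∑ k, alpha k ^ 2 / (lam k - l2)) <
      (l1 - ∑ k, alpha k ^ 2 / (lam k - l1)) := by
  have hu : ∑ k, alpha k ^ 2 * (lam k - l1)⁻¹ ^ 2 = 1 := by
    simpa [div_eq_mul_inv, inv_pow] using (sub_eq_zero.1 hc1).symm
  have hv : ∑ k, alpha k ^ 2 * (lam k - l2)⁻¹ ^ 2 = 1 := by
    simpa [div_eq_mul_inv, inv_pow] using (sub_eq_zero.1 hc2).symm
  obtain ⟨k, hk, hk0⟩ := exists_ne_zero_of_sum_ne_zero (hu ▸ one_ne_zero)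
  have huv : (lam k - l1)⁻¹ ≠ (lam k - l2)⁻¹ :=
    inv_injective.ne (sub_right_injective.ne hlt.ne')
  have hS := sum_mul_mul_lt_one_of_sum_mul_sq_eq_one (fun k _ => sq_nonneg (alpha k)) hu hv hk
    (left_ne_zero_of_mul hk0) huv
  have hdiff := sum_div_sub_sub_sum_div_sub univ (fun k => alpha k ^ 2) lam
    (fun k _ => h1 k) (fun k _ => h2 k)
  linarith [mul_pos (sub_pos.2 hlt) (sub_pos.2 hS)]

/-- If `λ̃₁ > λ̃₂` are critical points of `F(λ) = λ − ∑ₖ αₖ²/(λₖ − λ)` (with all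
`αₖ ≠ 0`), then `F(λ̃₁) > F(λ̃₂)`. -/
theorem F_strict_mono_at_critical_points {n : ℕ}
    (lam : Fin n → ℝ) (alpha : Fin n → ℝ) (halpha : ∀ k, alpha k ≠ 0)
    (l1 l2 : ℝ) (hlt : l2 < l1)
    (h1 : ∀ k, l1 ≠ lam k) (h2 : ∀ k, l2 ≠ lam k)
    (hc1 : 1 - ∑ k, alpha k ^ 2 / (lam k - l1) ^ 2 = 0)
    (hc2 : 1 - ∑ k, alpha k ^ 2 / (lam k - l2) ^ 2 = 0) :
    (l2 - ∑ k, alpha k ^ 2 / (lam k - l2)) <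
      (l1 - ∑ k, alpha k ^ 2 / (lam k - l1)) :=
  F_strict_mono_at_critical_points_general lam alpha l1 l2 hlt h1 h2 hc1 hc2
end

section
/- Let A₁,…,A_m be symmetric n×n matrices, v₁,…,v_m ∈ ℝⁿ, and let x ∈ ℝⁿ with |x| = 1 satisfy (c₁·A − λ₁)x = c₁·v and (c₂·A − λ₂)x = c₂·v for non-collinear c₁, c₂ ∈ ℝᵐ with (c₁ − c₂)·v ≠ 0 and with c₁·A − λ₁I positive definite. Then there exist c ∈ ℝᵐ, c ≠ 0, and λ ∈ ℝ such that c·A − λI is positive semidefinite with a zero eigenvalue and (c·A − λ)x = c·v. -/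
open Matrix BigOperators

/-!
Write `P = c₁·A − λ₁` and `D = P − (c₂·A − λ₂)`, so that `D x = (c₁ − c₂)·v ≠ 0`; then the
symmetric matrix `D` has a nonvanishing quadratic form, and along the pencil `P + μ D`
(which is `c·A − λ` for `c = (1 + μ)c₁ − μc₂`, `λ = (1 + μ)λ₁ − μλ₂`) the minimum of the
quadratic form on the unit sphere depends continuously on `μ`, is positive at `μ = 0` and
negative somewhere. At a zero of it the matrix is positive semidefinite, and the minimiser
lies in its kernel. Non-collinearity of `c₁, c₂` keeps `c` away from `0`.
-/

theorem Finset.sum_add_smul_sub_smul {ι R M : Type*} [Fintype ι] [CommRing R] [AddCommGroup M]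
    [Module R M] (c₁ c₂ : ι → R) (μ : R) (w : ι → M) :
    ∑ i, (c₁ + μ • (c₁ - c₂)) i • w i
      = ∑ i, c₁ i • w i + μ • (∑ i, c₁ i • w i - ∑ i, c₂ i • w i) := by
  simp only [← Fintype.linearCombination_apply R, map_add, map_smul, map_sub]

theorem add_smul_sub_ne_zero {K V : Type*} [Field K] [AddCommGroup V] [Module K V] {a b : V}
    (h : ∀ t : K, a ≠ t • b ∧ b ≠ t • a) (μ : K) : a + μ • (a - b) ≠ 0 := by
  intro h0
  rcases eq_or_ne μ 0 with rfl | hμ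
  · exact (h 0).1 (by simpa using h0)
  · refine (h (μ⁻¹ * (1 + μ))).2 ?_
    have hb : μ • b = (1 + μ) • a := by linear_combination (norm := module) -h0
    rw [mul_smul, ← hb, inv_smul_smul₀ hμ]

theorem Matrix.isHermitian_sum_smul_sub_smul_one {ι m : Type*} [DecidableEq ι] [Fintype m]
    {A : m → Matrix ι ι ℝ} (hA : ∀ i, (A i).IsHermitian) (c : m → ℝ) (lam : ℝ) :
    ((∑ i, c i • A i) - lam • (1 : Matrix ι ι ℝ)).IsHermitian :=
  (isSelfAdjoint_sum _ fun i _ => (hA i).smul (IsSelfAdjoint.all (c i))).sub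
    (isHermitian_one.smul (IsSelfAdjoint.all lam))

namespace Matrix

variable {ι : Type*} [Fintype ι]

theorem IsHermitian.exists_dotProduct_mulVec_self_ne_zero {D : Matrix ι ι ℝ} (hD : D.IsHermitian)
    {x : ι → ℝ} (hx : D *ᵥ x ≠ 0) : ∃ u, u ⬝ᵥ D *ᵥ u ≠ 0 := by
  by_contra! h
  have hsymm : x ⬝ᵥ D *ᵥ (D *ᵥ x) = (D *ᵥ x) ⬝ᵥ (D *ᵥ x) := by
    rw [dotProduct_mulVec, ← mulVec_transpose, ← conjTranspose_eq_transpose_of_trivial, hD.eq]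
  have hsum := h (x + D *ᵥ x)
  rw [mulVec_add, dotProduct_add, add_dotProduct, add_dotProduct, h x, h (D *ᵥ x), hsymm] at hsum
  exact hx (dotProduct_self_eq_zero.mp (by linarith))

theorem posSemidef_of_forall_mem_sphere {M : Matrix ι ι ℝ} (hM : M.IsHermitian)
    (h : ∀ u ∈ Metric.sphere (0 : ι → ℝ) 1, 0 ≤ u ⬝ᵥ M *ᵥ u) : M.PosSemidef := by
  refine PosSemidef.of_dotProduct_mulVec_nonneg hM fun u => ?_
  rw [star_trivial]
  rcases eq_or_ne u 0 with rfl | hu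
  · simp
  have hr : 0 < ‖u‖⁻¹ := inv_pos.mpr (norm_pos_iff.mpr hu)
  have hunit := h (‖u‖⁻¹ • u) (by simp [norm_smul, hu])
  rw [mulVec_smul, smul_dotProduct, dotProduct_smul, smul_eq_mul, smul_eq_mul] at hunit
  exact (mul_nonneg_iff_of_pos_left hr).mp ((mul_nonneg_iff_of_pos_left hr).mp hunit)

theorem PosDef.exists_posSemidef_add_smul_and_mulVec_eq_zero {P D : Matrix ι ι ℝ} (hP : P.PosDef)
    (hD : D.IsHermitian) {w : ι → ℝ} (hw : w ⬝ᵥ D *ᵥ w ≠ 0) :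
    ∃ μ : ℝ, (P + μ • D).PosSemidef ∧ ∃ u ≠ 0, (P + μ • D) *ᵥ u = 0 := by
  set K := Metric.sphere (0 : ι → ℝ) 1
  have hK : IsCompact K := isCompact_sphere 0 1
  have : Nontrivial (ι → ℝ) := nontrivial_of_ne w 0 (by rintro rfl; simp at hw)
  have hKne : K.Nonempty := (NormedSpace.sphere_nonempty).mpr zero_le_one
  set q : ℝ → (ι → ℝ) → ℝ := fun μ u => u ⬝ᵥ (P + μ • D) *ᵥ u
  have hq : Continuous ↿q := by fun_prop
  set f : ℝ → ℝ := fun μ => sInf (q μ '' K)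
  have hf : Continuous f := hK.continuous_sInf hq
  have hmin (μ : ℝ) : ∃ u ∈ K, f μ = q μ u :=
    hK.exists_sInf_image_eq hKne (hq.comp (.prodMk_right μ)).continuousOn
  have hpsd (μ : ℝ) (hμ : 0 ≤ f μ) : (P + μ • D).PosSemidef :=
    posSemidef_of_forall_mem_sphere (hP.isHermitian.add (hD.smul (IsSelfAdjoint.all μ)))
      fun u hu => hμ.trans <|
        csInf_le (hK.image (hq.comp (.prodMk_right μ))).bddBelow ⟨u, hu, rfl⟩
  have hf₀ : 0 < f 0 := by
    obtain ⟨u, hu, hfu⟩ := hmin 0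
    have hu0 : u ≠ 0 := ne_zero_of_mem_unit_sphere ⟨u, hu⟩
    simpa [hfu, q] using hP.dotProduct_mulVec_pos hu0
  set μ₀ := -(w ⬝ᵥ P *ᵥ w + 1) / (w ⬝ᵥ D *ᵥ w)
  have hqw : q μ₀ w = -1 := by
    simp only [q, μ₀, add_mulVec, smul_mulVec, dotProduct_add, dotProduct_smul, smul_eq_mul]
    field_simp; ring
  have hfμ₀ : f μ₀ < 0 := by
    by_contra! h
    have := (hpsd μ₀ h).dotProduct_mulVec_nonneg w
    rw [star_trivial] at this
    linarith
  obtain ⟨μ, -, hfμ⟩ := intermediate_value_uIcc hf.continuousOn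
    (Set.mem_uIcc.mpr (Or.inr ⟨hfμ₀.le, hf₀.le⟩) : (0 : ℝ) ∈ Set.uIcc (f 0) (f μ₀))
  obtain ⟨u, hu, hfu⟩ := hmin μ
  have hM := hpsd μ hfμ.ge
  refine ⟨μ, hM, u, ne_zero_of_mem_unit_sphere ⟨u, hu⟩, ?_⟩
  exact (hM.dotProduct_mulVec_zero_iff u).mp (by rw [star_trivial]; exact hfu.symm.trans hfμ)

end Matrix

theorem lemma_one_general {m n : ℕ}
    (A : Fin m → Matrix (Fin n) (Fin n) ℝ) (hA : ∀ i, (A i).IsHermitian)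
    (v : Fin m → (Fin n → ℝ)) (x : Fin n → ℝ)
    (c₁ c₂ : Fin m → ℝ) (lam₁ lam₂ : ℝ)
    (hnc : ∀ t : ℝ, c₁ ≠ t • c₂ ∧ c₂ ≠ t • c₁)
    (hv : (∑ i, (c₁ i - c₂ i) • v i) ≠ 0)
    (heq1 : ((∑ i, c₁ i • A i) - lam₁ • (1 : Matrix (Fin n) (Fin n) ℝ)).mulVec x
              = ∑ i, c₁ i • v i)
    (heq2 : ((∑ i, c₂ i • A i) - lam₂ • (1 : Matrix (Fin n) (Fin n) ℝ)).mulVec x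
              = ∑ i, c₂ i • v i)
    (hpd : ((∑ i, c₁ i • A i) - lam₁ • (1 : Matrix (Fin n) (Fin n) ℝ)).PosDef) :
    ∃ (c : Fin m → ℝ) (lam : ℝ), c ≠ 0 ∧
      ((∑ i, c i • A i) - lam • (1 : Matrix (Fin n) (Fin n) ℝ)).PosSemidef ∧
      (∃ u : Fin n → ℝ, u ≠ 0 ∧
        ((∑ i, c i • A i) - lam • (1 : Matrix (Fin n) (Fin n) ℝ)).mulVec u = 0) ∧
      ((∑ i, c i • A i) - lam • (1 : Matrix (Fin n) (Fin n) ℝ)).mulVec x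
        = ∑ i, c i • v i := by
  set P := (∑ i, c₁ i • A i) - lam₁ • (1 : Matrix (Fin n) (Fin n) ℝ)
  set N := (∑ i, c₂ i • A i) - lam₂ • (1 : Matrix (Fin n) (Fin n) ℝ)
  have hdiff : ∑ i, (c₁ i - c₂ i) • v i = ∑ i, c₁ i • v i - ∑ i, c₂ i • v i := by
    simp only [sub_smul, Finset.sum_sub_distrib]
  have hDx : (P - N) *ᵥ x = ∑ i, (c₁ i - c₂ i) • v i := by rw [sub_mulVec, heq1, heq2, hdiff]
  have hD : (P - N).IsHermitian :=
    hpd.isHermitian.sub (isHermitian_sum_smul_sub_smul_one hA c₂ lam₂)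
  obtain ⟨w, hw⟩ := hD.exists_dotProduct_mulVec_self_ne_zero (hDx ▸ hv)
  obtain ⟨μ, hpsd, u, hu, hker⟩ := hpd.exists_posSemidef_add_smul_and_mulVec_eq_zero hD hw
  have hM : (∑ i, (c₁ + μ • (c₁ - c₂)) i • A i) - (lam₁ + μ * (lam₁ - lam₂)) • (1 : Matrix _ _ ℝ)
      = P + μ • (P - N) := by
    rw [Finset.sum_add_smul_sub_smul]; module
  refine ⟨c₁ + μ • (c₁ - c₂), lam₁ + μ * (lam₁ - lam₂), add_smul_sub_ne_zero hnc μ,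
    hM ▸ hpsd, ⟨u, hu, hM ▸ hker⟩, ?_⟩
  rw [hM, add_mulVec, smul_mulVec, heq1, hDx, hdiff, Finset.sum_add_smul_sub_smul]

/-- Lemma 1 of the paper: if a unit vector `x` solves `(cᵢ·A − λᵢ)x = cᵢ·v` for two
non-collinear `c₁, c₂` with `(c₁ − c₂)·v ≠ 0` and `c₁·A − λ₁·I` positive definite,
then there are `c ≠ 0` and `λ` with `c·A − λ·I` positive semidefinite, possessing a
zero eigenvalue, and `(c·A − λ)x = c·v`. -/
theorem lemma_one {m n : ℕ}
    (A : Fin m → Matrix (Fin n) (Fin n) ℝ) (hA : ∀ i, (A i).IsHermitian)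
    (v : Fin m → (Fin n → ℝ)) (x : Fin n → ℝ) (hx : (∑ i, x i ^ 2) = 1)
    (c₁ c₂ : Fin m → ℝ) (lam₁ lam₂ : ℝ)
    (hnc : ∀ t : ℝ, c₁ ≠ t • c₂ ∧ c₂ ≠ t • c₁)
    (hv : (∑ i, (c₁ i - c₂ i) • v i) ≠ 0)
    (heq1 : ((∑ i, c₁ i • A i) - lam₁ • (1 : Matrix (Fin n) (Fin n) ℝ)).mulVec x
              = ∑ i, c₁ i • v i)
    (heq2 : ((∑ i, c₂ i • A i) - lam₂ • (1 : Matrix (Fin n) (Fin n) ℝ)).mulVec x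
              = ∑ i, c₂ i • v i)
    (hpd : ((∑ i, c₁ i • A i) - lam₁ • (1 : Matrix (Fin n) (Fin n) ℝ)).PosDef) :
    ∃ (c : Fin m → ℝ) (lam : ℝ), c ≠ 0 ∧
      ((∑ i, c i • A i) - lam • (1 : Matrix (Fin n) (Fin n) ℝ)).PosSemidef ∧
      (∃ u : Fin n → ℝ, u ≠ 0 ∧
        ((∑ i, c i • A i) - lam • (1 : Matrix (Fin n) (Fin n) ℝ)).mulVec u = 0) ∧
      ((∑ i, c i • A i) - lam • (1 : Matrix (Fin n) (Fin n) ℝ)).mulVec x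
        = ∑ i, c i • v i :=
  lemma_one_general A hA v x c₁ c₂ lam₁ lam₂ hnc hv heq1 heq2 hpd
end

section
/- Let A be a symmetric n×n matrix, λ < λ_min(A), and v ∈ ℝⁿ. If x solves (A − λ)x = v and |x| = 1, then c·y is uniquely minimized at x over the unit sphere, where y(z) = zᵀAz − 2vᵀz; that is, for any unit vector z ≠ x, zᵀAz − 2vᵀz > xᵀAx − 2vᵀx. -/
open Matrix BigOperators

/-!
Since `λ` lies below the spectrum of `A`, the matrix `A - λ • 1` is positive definite. As
`(A - λ • 1) x = v` and `|x| = |z| = 1`, the difference of the objective values at `z` and at `x`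
is exactly the quadratic form of `A - λ • 1` at `z - x`, which is positive for `z ≠ x`.
-/

namespace Matrix

open Unitary
open scoped ComplexOrder

theorem IsHermitian.posDef_sub_smul_one {n 𝕜 : Type*} [Fintype n] [DecidableEq n] [RCLike 𝕜]
    {A : Matrix n n 𝕜} (hA : A.IsHermitian) {c : ℝ} (hc : ∀ i, c < hA.eigenvalues i) :
    (A - c • (1 : Matrix n n 𝕜)).PosDef := by
  have hshift : A - c • (1 : Matrix n n 𝕜) = conjStarAlgAut 𝕜 _ hA.eigenvectorUnitary
      (diagonal (RCLike.ofReal ∘ (hA.eigenvalues - Function.const n c))) := by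
    conv_lhs => rw [hA.spectral_theorem]
    rw [← algebraMap_smul 𝕜 c (1 : Matrix n n 𝕜),
      ← map_one (conjStarAlgAut 𝕜 _ hA.eigenvectorUnitary), ← map_smul, ← map_sub]
    congr 1
    ext i j
    by_cases h : i = j <;> simp [h, Algebra.algebraMap_eq_smul_one]
  rw [hshift, conjStarAlgAut_apply, isUnit_coe.posDef_star_right_conjugate_iff,
    posDef_diagonal_iff]
  simpa [sub_pos] using hc

theorem IsSymm.dotProduct_mulVec_sub {n R : Type*} [Fintype n] [CommRing R] {M : Matrix n n R}
    (hM : M.IsSymm) (z x : n → R) :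
    (z - x) ⬝ᵥ M *ᵥ (z - x) = z ⬝ᵥ M *ᵥ z - 2 * (M *ᵥ x ⬝ᵥ z) + x ⬝ᵥ M *ᵥ x := by
  have hswap : x ⬝ᵥ M *ᵥ z = M *ᵥ x ⬝ᵥ z := by
    rw [dotProduct_mulVec, ← mulVec_transpose, hM.eq]
  simp only [mulVec_sub, dotProduct_sub, sub_dotProduct, hswap, dotProduct_comm z (M *ᵥ x)]
  ring

end Matrix

theorem dotProduct_self_eq_sum_sq {n R : Type*} [Fintype n] [Semiring R] (x : n → R) :
    x ⬝ᵥ x = ∑ i, x i ^ 2 := by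
  simp [dotProduct, sq]

theorem unique_min_below_spectrum_general {n : ℕ}
    (A : Matrix (Fin n) (Fin n) ℝ) (hA : A.IsHermitian)
    (lam : ℝ) (hlam : lam < ⨅ i, hA.eigenvalues i)
    (v x : Fin n → ℝ) (hx : (∑ i, x i ^ 2) = 1)
    (heq : (A - lam • (1 : Matrix (Fin n) (Fin n) ℝ)).mulVec x = v) :
    ∀ z : Fin n → ℝ, (∑ i, z i ^ 2) = 1 → z ≠ x →
      x ⬝ᵥ A.mulVec x - 2 * (v ⬝ᵥ x) < z ⬝ᵥ A.mulVec z - 2 * (v ⬝ᵥ z) := by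
  intro z hz hzx
  set B := A - lam • (1 : Matrix (Fin n) (Fin n) ℝ) with hB_def
  have hB : B.PosDef := hA.posDef_sub_smul_one fun i =>
    hlam.trans_le (ciInf_le (Finite.bddBelow_range _) i)
  have hgap : 0 < (z - x) ⬝ᵥ B *ᵥ (z - x) := by
    simpa using hB.dotProduct_mulVec_pos (sub_ne_zero.mpr hzx)
  have hunit {w : Fin n → ℝ} (hw : ∑ i, w i ^ 2 = 1) : w ⬝ᵥ B *ᵥ w = w ⬝ᵥ A *ᵥ w - lam := by
    rw [hB_def, sub_mulVec, smul_mulVec, one_mulVec, dotProduct_sub, dotProduct_smul, smul_eq_mul,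
      dotProduct_self_eq_sum_sq, hw, mul_one]
  have hexpand := (isHermitian_iff_isSymm.mp hB.isHermitian).dotProduct_mulVec_sub z x
  rw [hunit hz, hunit hx, heq] at hexpand
  have hvx : v ⬝ᵥ x = x ⬝ᵥ A *ᵥ x - lam := by rw [dotProduct_comm, ← heq, hunit hx]
  linarith

/-- If `λ < λ_min(A)` and the unit vector `x` solves `(A − λ)x = v`, then `x` is the
unique minimizer of `zᵀAz − 2vᵀz` over the unit sphere. -/
theorem unique_min_below_spectrum {n : ℕ} (hn : 0 < n)
    (A : Matrix (Fin n) (Fin n) ℝ) (hA : A.IsHermitian)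
    (lam : ℝ) (hlam : lam < ⨅ i, hA.eigenvalues i)
    (v x : Fin n → ℝ) (hx : (∑ i, x i ^ 2) = 1)
    (heq : (A - lam • (1 : Matrix (Fin n) (Fin n) ℝ)).mulVec x = v) :
    ∀ z : Fin n → ℝ, (∑ i, z i ^ 2) = 1 → z ≠ x →
      x ⬝ᵥ A.mulVec x - 2 * (v ⬝ᵥ x) < z ⬝ᵥ A.mulVec z - 2 * (v ⬝ᵥ z) :=
  unique_min_below_spectrum_general A hA lam hlam v x hx heq
end

section
/- Let A₁,…,A_m be symmetric n×n matrices, v₁,…,v_m ∈ ℝⁿ, and suppose that for every unit c ∈ ℝᵐ the matrix c·A − λ_min(c·A)·I together with w(c) = lim_{ε→0⁺}(c·A − λ_min(c·A) + ε)⁻¹(c·v) satisfies |w(c)| > 1 (in particular c·v is orthogonal to the λ_min(c·A)-eigenspace). Then for each unit c ∈ ℝᵐ there is a unique unit vector x minimizing c·f(x) = Σᵢ cᵢ(xᵀAᵢx − 2vᵢᵀx) over the sphere |x| = 1, and the associated multiplier λ satisfies λ < λ_min(c·A). -/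
open Matrix BigOperators Filter Topology

/-! For `μ < λ_min(B)` the matrix `B - μ` is positive definite, and if `(B - μ) x = b` then on the
sphere `|z| = |x|` the objective `f(z) = zᵀ B z - 2 bᵀ z` satisfies
`f(z) - f(x) = (z - x)ᵀ (B - μ) (z - x)`, so `x` is its unique minimizer there.
A unit solution exists by the intermediate value theorem for `μ ↦ |(B - μ)⁻¹ b|²` on
`(-∞, λ_min)`: it tends to `|w|² > 1` as `μ → λ_min`, and it is at most `|b|² / (λ_min - μ)²`,
hence below `1`, far to the left. -/

namespace Matrix

section Objective

variable {ι : Type*} [Fintype ι]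

def quadraticObjective (B : Matrix ι ι ℝ) (b x : ι → ℝ) : ℝ :=
  x ⬝ᵥ B *ᵥ x - 2 * (b ⬝ᵥ x)

theorem sum_mul_quadraticObjective {κ : Type*} (s : Finset κ) (c : κ → ℝ)
    (A : κ → Matrix ι ι ℝ) (v : κ → ι → ℝ) (x : ι → ℝ) :
    ∑ i ∈ s, c i * quadraticObjective (A i) (v i) x =
      quadraticObjective (∑ i ∈ s, c i • A i) (∑ i ∈ s, c i • v i) x := by
  simp only [quadraticObjective, sum_mulVec, smul_mulVec, dotProduct_sum, sum_dotProduct,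
    dotProduct_smul, smul_dotProduct, smul_eq_mul, Finset.mul_sum, ← Finset.sum_sub_distrib,
    mul_sub]
  refine Finset.sum_congr rfl fun i _ => by ring

theorem IsHermitian.dotProduct_mulVec_comm {B : Matrix ι ι ℝ} (hB : B.IsHermitian)
    (x y : ι → ℝ) :
    x ⬝ᵥ B *ᵥ y = y ⬝ᵥ B *ᵥ x := by
  rw [dotProduct_mulVec, ← mulVec_transpose, (isHermitian_iff_isSymm.mp hB).eq, dotProduct_comm]

end Objective

variable {ι : Type*} [Fintype ι] [DecidableEq ι] {B : Matrix ι ι ℝ}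

theorem IsHermitian.posSemidef_sub_iInf_eigenvalues_smul_one (hB : B.IsHermitian) :
    (B - (⨅ j, hB.eigenvalues j) • (1 : Matrix ι ι ℝ)).PosSemidef := by
  have hsub : (B - (⨅ j, hB.eigenvalues j) • (1 : Matrix ι ι ℝ)).IsHermitian := by
    simp only [IsHermitian, conjTranspose_sub, conjTranspose_smul, hB.eq, conjTranspose_one,
      star_trivial]
  refine posSemidef_iff_isHermitian_and_spectrum_nonneg.mpr ⟨hsub, ?_⟩
  rw [← Algebra.algebraMap_eq_smul_one, ← spectrum.sub_singleton_eq,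
    hB.spectrum_real_eq_range_eigenvalues]
  rintro _ ⟨_, ⟨j, rfl⟩, _, rfl, rfl⟩
  exact sub_nonneg.mpr (ciInf_le (Finite.bddBelow_range hB.eigenvalues) j)

theorem IsHermitian.iInf_eigenvalues_mul_le_dotProduct_mulVec (hB : B.IsHermitian) (x : ι → ℝ) :
    (⨅ j, hB.eigenvalues j) * (x ⬝ᵥ x) ≤ x ⬝ᵥ B *ᵥ x := by
  have := hB.posSemidef_sub_iInf_eigenvalues_smul_one.dotProduct_mulVec_nonneg x
  simpa [sub_mulVec, smul_mulVec, dotProduct_sub, dotProduct_smul] using this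

theorem IsHermitian.posDef_sub_smul_one_of_lt_iInf (hB : B.IsHermitian) {μ : ℝ}
    (hμ : μ < ⨅ j, hB.eigenvalues j) : (B - μ • (1 : Matrix ι ι ℝ)).PosDef := by
  have h := PosDef.posSemidef_add hB.posSemidef_sub_iInf_eigenvalues_smul_one
    (PosDef.one.smul (sub_pos.mpr hμ))
  rwa [sub_smul, sub_add_sub_cancel] at h

theorem IsHermitian.mulVec_inv_sub_smul_one_mulVec (hB : B.IsHermitian) {μ : ℝ}
    (hμ : μ < ⨅ j, hB.eigenvalues j) (b : ι → ℝ) :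
    (B - μ • (1 : Matrix ι ι ℝ)) *ᵥ ((B - μ • (1 : Matrix ι ι ℝ))⁻¹ *ᵥ b) = b := by
  rw [mulVec_mulVec, mul_nonsing_inv _ (hB.posDef_sub_smul_one_of_lt_iInf hμ).det_pos.ne'.isUnit,
    one_mulVec]

theorem IsHermitian.quadraticObjective_sub_eq (hB : B.IsHermitian) {μ : ℝ} {b x z : ι → ℝ}
    (hx : (B - μ • (1 : Matrix ι ι ℝ)) *ᵥ x = b) (hxz : z ⬝ᵥ z = x ⬝ᵥ x) :
    quadraticObjective B b z - quadraticObjective B b x =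
      (z - x) ⬝ᵥ (B - μ • (1 : Matrix ι ι ℝ)) *ᵥ (z - x) := by
  have hBx : B *ᵥ x = b + μ • x := by
    rw [← hx, sub_mulVec, smul_mulVec, one_mulVec, sub_add_cancel]
  have hsymm := hB.dotProduct_mulVec_comm x z
  simp only [quadraticObjective, sub_mulVec, smul_mulVec, one_mulVec, mulVec_sub, dotProduct_sub,
    sub_dotProduct, dotProduct_smul, smul_eq_mul, hBx, dotProduct_add] at hsymm ⊢
  rw [dotProduct_comm b z, dotProduct_comm b x, dotProduct_comm x z] at *
  rw [hsymm, hxz]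
  ring

theorem IsHermitian.quadraticObjective_le (hB : B.IsHermitian) {μ : ℝ} {b x z : ι → ℝ}
    (hpos : (B - μ • (1 : Matrix ι ι ℝ)).PosSemidef)
    (hx : (B - μ • (1 : Matrix ι ι ℝ)) *ᵥ x = b) (hxz : z ⬝ᵥ z = x ⬝ᵥ x) :
    quadraticObjective B b x ≤ quadraticObjective B b z := by
  have := hpos.dotProduct_mulVec_nonneg (z - x)
  rw [star_trivial, ← hB.quadraticObjective_sub_eq hx hxz] at this
  linarith

theorem IsHermitian.quadraticObjective_lt (hB : B.IsHermitian) {μ : ℝ} {b x z : ι → ℝ}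
    (hpos : (B - μ • (1 : Matrix ι ι ℝ)).PosDef)
    (hx : (B - μ • (1 : Matrix ι ι ℝ)) *ᵥ x = b) (hxz : z ⬝ᵥ z = x ⬝ᵥ x) (hne : z ≠ x) :
    quadraticObjective B b x < quadraticObjective B b z := by
  have := hpos.dotProduct_mulVec_pos (sub_ne_zero.mpr hne)
  rw [star_trivial, ← hB.quadraticObjective_sub_eq hx hxz] at this
  linarith

theorem IsHermitian.sq_sub_mul_dotProduct_self_le (hB : B.IsHermitian) {μ : ℝ} {b x : ι → ℝ}
    (hμ : μ ≤ ⨅ j, hB.eigenvalues j) (hx : (B - μ • (1 : Matrix ι ι ℝ)) *ᵥ x = b) :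
    ((⨅ j, hB.eigenvalues j) - μ) ^ 2 * (x ⬝ᵥ x) ≤ b ⬝ᵥ b := by
  have hgap : ((⨅ j, hB.eigenvalues j) - μ) * (x ⬝ᵥ x) ≤ x ⬝ᵥ b := by
    have := hB.iInf_eigenvalues_mul_le_dotProduct_mulVec x
    rw [← hx, sub_mulVec, smul_mulVec, one_mulVec, dotProduct_sub, dotProduct_smul, smul_eq_mul]
    linarith
  have hcs : (x ⬝ᵥ b) ^ 2 ≤ (x ⬝ᵥ x) * (b ⬝ᵥ b) := by
    simpa only [dotProduct, sq] using Finset.sum_mul_sq_le_sq_mul_sq Finset.univ x b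
  have hxx : 0 ≤ x ⬝ᵥ x := by simpa using dotProduct_self_star_nonneg x
  have hd : 0 ≤ (⨅ j, hB.eigenvalues j) - μ := sub_nonneg.mpr hμ
  rcases hxx.eq_or_lt with h0 | hpos
  · rw [← h0, mul_zero]; simpa using dotProduct_self_star_nonneg b
  · refine le_of_mul_le_mul_right ?_ hpos
    nlinarith [mul_nonneg hd hxx]

theorem continuousAt_inv_sub_smul_one_mulVec (B : Matrix ι ι ℝ) (b : ι → ℝ) {μ : ℝ}
    (h : (B - μ • (1 : Matrix ι ι ℝ)).det ≠ 0) :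
    ContinuousAt (fun t : ℝ => (B - t • (1 : Matrix ι ι ℝ))⁻¹ *ᵥ b) μ := by
  have hinv : ContinuousAt Inv.inv (B - μ • (1 : Matrix ι ι ℝ)) :=
    continuousAt_matrix_inv _ (by rw [Ring.inverse_eq_inv']; exact continuousAt_inv₀ h)
  refine (continuous_id.matrix_mulVec continuous_const).continuousAt.comp (hinv.comp (x := μ) ?_)
  fun_prop

theorem IsHermitian.exists_lt_iInf_mulVec_eq_of_tendsto (hB : B.IsHermitian) {b w : ι → ℝ}
    (hw : Tendsto (fun ε : ℝ => (B - ((⨅ j, hB.eigenvalues j) - ε) • (1 : Matrix ι ι ℝ))⁻¹ *ᵥ b)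
      (𝓝[>] 0) (𝓝 w))
    (hw1 : 1 < w ⬝ᵥ w) :
    ∃ μ < ⨅ j, hB.eigenvalues j, ∃ x : ι → ℝ,
      x ⬝ᵥ x = 1 ∧ (B - μ • (1 : Matrix ι ι ℝ)) *ᵥ x = b := by
  set lmin := ⨅ j, hB.eigenvalues j
  set g : ℝ → ι → ℝ := fun t => (B - t • (1 : Matrix ι ι ℝ))⁻¹ *ᵥ b
  have hsq : Continuous fun y : ι → ℝ => y ⬝ᵥ y := continuous_id.dotProduct continuous_id
  obtain ⟨ε, hε, hεpos⟩ : ∃ ε : ℝ, 1 < g (lmin - ε) ⬝ᵥ g (lmin - ε) ∧ 0 < ε :=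
    ((((hsq.tendsto w).comp hw).eventually (lt_mem_nhds hw1)).and self_mem_nhdsWithin).exists
  set t₁ := min (lmin - ε) (lmin - (b ⬝ᵥ b + 1))
  have ht₁ : t₁ < lmin := (min_le_left _ _).trans_lt (by linarith)
  have hgt₁ : g t₁ ⬝ᵥ g t₁ ≤ 1 := by
    have hbound := hB.sq_sub_mul_dotProduct_self_le ht₁.le
      (hB.mulVec_inv_sub_smul_one_mulVec ht₁ b)
    have hgap : b ⬝ᵥ b + 1 ≤ lmin - t₁ := by
      linarith [min_le_right (lmin - ε) (lmin - (b ⬝ᵥ b + 1))]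
    have hbb : 0 ≤ b ⬝ᵥ b := by simpa using dotProduct_self_star_nonneg b
    have hgg : 0 ≤ g t₁ ⬝ᵥ g t₁ := by simpa using dotProduct_self_star_nonneg (g t₁)
    nlinarith
  have hcont : ContinuousOn (fun t => g t ⬝ᵥ g t) (Set.Icc t₁ (lmin - ε)) := fun t ht =>
    (hsq.continuousAt.comp (continuousAt_inv_sub_smul_one_mulVec B b
      (hB.posDef_sub_smul_one_of_lt_iInf (by linarith [ht.2])).det_pos.ne')).continuousWithinAt
  obtain ⟨μ, hμ, hgμ⟩ := intermediate_value_Icc (min_le_left _ _) hcont ⟨hgt₁, hε.le⟩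
  have hμlt : μ < lmin := by linarith [hμ.2]
  exact ⟨μ, hμlt, g μ, hgμ, hB.mulVec_inv_sub_smul_one_mulVec hμlt b⟩

end Matrix

theorem unique_min_with_multiplier_below_general {m n : ℕ}
    (A : Fin m → Matrix (Fin n) (Fin n) ℝ)
    (hcA : ∀ c : Fin m → ℝ, (∑ i, c i • A i).IsHermitian)
    (v : Fin m → (Fin n → ℝ))
    (hyp : ∀ c : Fin m → ℝ, (∑ i, c i ^ 2) = 1 →
      ∃ w : Fin n → ℝ,
        Tendsto
          (fun ε : ℝ =>
            ((∑ i, c i • A i) -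
              ((⨅ j, (hcA c).eigenvalues j) - ε) • (1 : Matrix (Fin n) (Fin n) ℝ))⁻¹.mulVec
              (∑ i, c i • v i))
          (𝓝[>] 0) (𝓝 w) ∧
        1 < ∑ i, w i ^ 2) :
    ∀ c : Fin m → ℝ, (∑ i, c i ^ 2) = 1 →
      ∃! x : Fin n → ℝ, (∑ i, x i ^ 2) = 1 ∧
        (∀ z : Fin n → ℝ, (∑ i, z i ^ 2) = 1 →
          (∑ i, c i * (x ⬝ᵥ (A i).mulVec x - 2 * (v i ⬝ᵥ x))) ≤
          (∑ i, c i * (z ⬝ᵥ (A i).mulVec z - 2 * (v i ⬝ᵥ z)))) ∧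
        ∃ lam : ℝ, lam < (⨅ j, (hcA c).eigenvalues j) ∧
          ((∑ i, c i • A i) - lam • (1 : Matrix (Fin n) (Fin n) ℝ)).mulVec x
            = ∑ i, c i • v i := by
  intro c hc
  have hsq : ∀ x : Fin n → ℝ, ∑ i, x i ^ 2 = x ⬝ᵥ x := fun x => by simp [dotProduct, sq]
  have hobj : ∀ x : Fin n → ℝ, ∑ i, c i * (x ⬝ᵥ (A i).mulVec x - 2 * (v i ⬝ᵥ x)) =
      quadraticObjective (∑ i, c i • A i) (∑ i, c i • v i) x :=
    sum_mul_quadraticObjective _ c A v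
  obtain ⟨w, hw, hw1⟩ := hyp c hc
  obtain ⟨μ, hμ, x, hx1, hx⟩ := (hcA c).exists_lt_iInf_mulVec_eq_of_tendsto hw (hsq w ▸ hw1)
  have hpos := (hcA c).posDef_sub_smul_one_of_lt_iInf hμ
  refine ⟨x, ⟨hsq x ▸ hx1, fun z hz => ?_, μ, hμ, hx⟩, ?_⟩
  · rw [hobj, hobj]
    exact (hcA c).quadraticObjective_le hpos.posSemidef hx (by rw [← hsq, hz, hx1])
  · rintro y ⟨hy1, hymin, -⟩
    by_contra hne
    have hle := hymin x (hsq x ▸ hx1)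
    rw [hobj, hobj] at hle
    exact hle.not_gt ((hcA c).quadraticObjective_lt hpos hx (by rw [← hsq, hy1, hx1]) hne)

/-- Under the sufficient condition `|w(c)| > 1`, where
`w(c) = lim_{ε→0⁺} (c·A − λ_min(c·A) + ε)⁻¹ (c·v)`, for each unit `c` there is a
unique unit vector minimizing `c·f` over the sphere, and its Lagrange multiplier
satisfies `λ < λ_min(c·A)`. -/
theorem unique_min_with_multiplier_below {m n : ℕ} (hm : 0 < m) (hn : 0 < n)
    (A : Fin m → Matrix (Fin n) (Fin n) ℝ) (hA : ∀ i, (A i).IsHermitian)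
    (hcA : ∀ c : Fin m → ℝ, (∑ i, c i • A i).IsHermitian)
    (v : Fin m → (Fin n → ℝ))
    (hyp : ∀ c : Fin m → ℝ, (∑ i, c i ^ 2) = 1 →
      ∃ w : Fin n → ℝ,
        Tendsto
          (fun ε : ℝ =>
            ((∑ i, c i • A i) -
              ((⨅ j, (hcA c).eigenvalues j) - ε) • (1 : Matrix (Fin n) (Fin n) ℝ))⁻¹.mulVec
              (∑ i, c i • v i))
          (𝓝[>] 0) (𝓝 w) ∧
        1 < ∑ i, w i ^ 2) :
    ∀ c : Fin m → ℝ, (∑ i, c i ^ 2) = 1 →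
      ∃! x : Fin n → ℝ, (∑ i, x i ^ 2) = 1 ∧
        (∀ z : Fin n → ℝ, (∑ i, z i ^ 2) = 1 →
          (∑ i, c i * (x ⬝ᵥ (A i).mulVec x - 2 * (v i ⬝ᵥ x))) ≤
          (∑ i, c i * (z ⬝ᵥ (A i).mulVec z - 2 * (v i ⬝ᵥ z)))) ∧
        ∃ lam : ℝ, lam < (⨅ j, (hcA c).eigenvalues j) ∧
          ((∑ i, c i • A i) - lam • (1 : Matrix (Fin n) (Fin n) ℝ)).mulVec x
            = ∑ i, c i • v i :=
  unique_min_with_multiplier_below_general A hcA v hyp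
end
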